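/- Let $A \in \mathbb{R}^{m \times n}$, let $[m] = \mathcal{P}_1 \uplus \cdots \uplus \mathcal{P}_p$ with $|\mathcal{P}_l| = m_l$, and fix targets $0 \le k_l \le m_l$. Let $S \subseteq [m]$ with $|S \cap \mathcal{P}_l| = t_l \le k_l$ for all $l$, and let $B = A - \pi_S(A)$. Then $\sum_{T} \det(A_{S \cup T} A_{S \cup T}^T) = \det(A_S A_S^T) \cdot |c''(B B^T)|$, where the sum runs over all $T \subseteq [m] \setminus S$ with $|T \cap \mathcal{P}_l| = k_l - t_l$ for all $1 \le l \le p$, and $c''(B B^T) = c_{m_1-k_1+t_1, \dots, m_p-k_p+t_p}(B B^T)$ is the indicated coefficient of the multivariate characteristic polynomial of $B B^T$. -/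

import Mathlib

/-- `res v S` is the matrix `B = v - π_S(v)`: its `i`-th row is the component of the `i`-th
row `v i` orthogonal to the span of the rows of `v` indexed by `S`. -/
noncomputable def res {m n : ℕ} (v : Fin m → EuclideanSpace ℝ (Fin n)) (S : Finset (Fin m)) :
    Fin m → EuclideanSpace ℝ (Fin n) :=
  fun i => v i - (Submodule.orthogonalProjectionOnto (Submodule.span ℝ (v '' (S : Set (Fin m)))) (v i) :
    EuclideanSpace ℝ (Fin n))

/-- `gramDet v S = det(v_S v_S^T)`: the determinant of the Gram matrix of the rows of `v`
indexed by `S`. -/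
noncomputable def gramDet {m n : ℕ} (v : Fin m → EuclideanSpace ℝ (Fin n))
    (S : Finset (Fin m)) : ℝ :=
  Matrix.det (Matrix.of fun i j : {x // x ∈ S} => (inner ℝ (v i.1) (v j.1) : ℝ))

/-- `gram v = v vᵀ`, the Gram matrix of the rows of `v`. -/
noncomputable def gram {m n : ℕ} (v : Fin m → EuclideanSpace ℝ (Fin n)) :
    Matrix (Fin m) (Fin m) ℝ :=
  Matrix.of fun i j => (inner ℝ (v i) (v j) : ℝ)

/-- The coefficient `c_{e₁,…,e_p}(M)` of the monomial `x₁^{e₁} ⋯ x_p^{e_p}` in the multivariate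
characteristic polynomial `det(M - x₁I₁ - ⋯ - x_pI_p)`, where the partition
`[m] = 𝒫₁ ⊎ ⋯ ⊎ 𝒫_p` is encoded by the labelling function `part` (so `𝒫_l = part⁻¹(l)`),
and `I_l` is the diagonal 0/1 matrix supported on `𝒫_l`. -/
noncomputable def mcharCoeff {m p : ℕ} (M : Matrix (Fin m) (Fin m) ℝ) (part : Fin m → Fin p)
    (e : Fin p → ℕ) : ℝ :=
  MvPolynomial.coeff (Finsupp.equivFunOnFinite.symm e)
    (Matrix.det (Matrix.of fun i j =>
      MvPolynomial.C (M i j) - (if i = j then MvPolynomial.X (part i) else 0)))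

/-!
Subtracting from the rows of `A` indexed by `T` their projections onto the span of the rows
indexed by `S` is a unimodular row operation that makes the Gram matrix of `S ∪ T` block
diagonal, so `det(A_{S∪T} A_{S∪T}ᵀ) = det(A_S A_Sᵀ) · det(B_T B_Tᵀ)`. Expanding
`det(M - x₁I₁ - ⋯ - x_pI_p)` multilinearly in the rows writes `c_e(M)` as `(-1)^{e₁+⋯+e_p}`
times the sum of the principal minors `det M_T` with `|𝒫_l \ T| = e_l`, that is
`|T ∩ 𝒫_l| = k_l - t_l` for `e = m - k + t`. For `M = BBᵀ` these minors are Gram determinants,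
hence nonnegative, and they vanish when `T` meets `S` because the rows of `B` indexed by `S`
are zero.
-/

open Matrix Finset
open scoped InnerProductSpace

namespace Matrix

variable {E : Type*} [NormedAddCommGroup E] [InnerProductSpace ℝ E]

lemma gram_sum_smul {ι κ : Type*} [Fintype κ] (L : Matrix ι κ ℝ) (v : κ → E) :
    gram ℝ (fun a => ∑ b, L a b • v b) = L * gram ℝ v * Lᵀ := by
  ext a a'
  simp only [gram_apply, mul_apply, transpose_apply, sum_inner, inner_sum, real_inner_smul_left,
    real_inner_smul_right, Finset.sum_mul]
  exact sum_congr rfl fun b _ => sum_congr rfl fun b' _ => by ring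

lemma det_gram_sumElim_of_inner_eq_zero {ι κ : Type*} [Fintype ι] [Fintype κ] [DecidableEq ι]
    [DecidableEq κ] (x : ι → E) (z : κ → E) (h : ∀ i j, ⟪x i, z j⟫_ℝ = 0) :
    (gram ℝ (Sum.elim x z)).det = (gram ℝ x).det * (gram ℝ z).det := by
  have hblocks : gram ℝ (Sum.elim x z) = fromBlocks (gram ℝ x) 0 0 (gram ℝ z) := by
    ext (i | i) (j | j)
    · rfl
    · exact h i j
    · exact (real_inner_comm _ _).trans (h j i)
    · rfl
  rw [hblocks, det_fromBlocks_zero₁₂]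

lemma det_gram_sumElim_of_sub_mem_span {ι κ : Type*} [Fintype ι] [Fintype κ] [DecidableEq ι]
    [DecidableEq κ] (x : ι → E) (y z : κ → E)
    (h : ∀ j, y j - z j ∈ Submodule.span ℝ (Set.range x)) :
    (gram ℝ (Sum.elim x y)).det = (gram ℝ (Sum.elim x z)).det := by
  choose c hc using fun j => (Submodule.mem_span_range_iff_exists_fun ℝ).mp (h j)
  let L : Matrix (ι ⊕ κ) (ι ⊕ κ) ℝ := fromBlocks 1 0 (of fun j i => -c j i) 1
  have hz : Sum.elim x z = fun a => ∑ b, L a b • Sum.elim x y b := by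
    ext1 (i | j)
    · simp [L, one_apply]
    · simp [L, one_apply, hc, sum_neg_distrib]
  have hL : L.det = 1 := by simp [L]
  rw [hz, gram_sum_smul, det_mul, det_mul, det_transpose, hL, one_mul, mul_one]

lemma det_add_diagonal {n R : Type*} [Fintype n] [DecidableEq n] [CommRing R]
    (M : Matrix n n R) (d : n → R) :
    (M + diagonal d).det =
      ∑ s : Finset n, (∏ i ∈ sᶜ, d i) * (M.submatrix ((↑) : s → n) (↑)).det := by
  have hrows : ∀ s : Finset n, s.piecewise M.row (diagonal d).row
      = fun i => (if i ∈ s then 1 else d i) • s.piecewise M.row (1 : Matrix n n R).row i := by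
    intro s; ext i j
    by_cases hi : i ∈ s <;> simp [Finset.piecewise, hi, row, diagonal_apply, one_apply]
  change detRowAlternating (M.row + (diagonal d).row) = _
  rw [AlternatingMap.map_add_univ]
  refine sum_congr rfl fun s _ => ?_
  rw [hrows, AlternatingMap.map_smul_univ, ← det_piecewise_one_eq_submatrix_det]
  congr 1
  rw [prod_ite, prod_const_one, one_mul, ← compl_filter, filter_mem_eq_inter, univ_inter]

end Matrix

lemma Finsupp.finsetSum_single_one_apply {α β : Type*} [DecidableEq β] (f : α → β)
    (u : Finset α) (b : β) :
    (∑ i ∈ u, Finsupp.single (f i) 1) b = #(u.filter (f · = b)) := by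
  simp [Finsupp.finsetSum_apply, Finsupp.single_apply]

lemma Finset.card_filter_add_card_filter_compl {α : Type*} [Fintype α] [DecidableEq α]
    (s : Finset α) (q : α → Prop) [DecidablePred q] :
    #(s.filter q) + #(sᶜ.filter q) = #(univ.filter q) := by
  rw [← card_union_of_disjoint (disjoint_filter_filter disjoint_compl_right), ← filter_union,
    union_compl]

open MvPolynomial in
lemma mcharCoeff_eq_sum_det_submatrix {m p : ℕ} (M : Matrix (Fin m) (Fin m) ℝ)
    (part : Fin m → Fin p) (e : Fin p → ℕ) :
    mcharCoeff M part e = (-1) ^ (∑ l, e l) *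
      ∑ s ∈ univ.filter (fun s : Finset (Fin m) => ∀ l, #(sᶜ.filter (part · = l)) = e l),
        (M.submatrix ((↑) : s → Fin m) (↑)).det := by
  have hmatrix : (of fun i j => C (M i j) - if i = j then X (part i) else 0 :
      Matrix _ _ (MvPolynomial (Fin p) ℝ)) = M.map C + diagonal fun i => -X (part i) := by
    ext i j; by_cases h : i = j <;> simp [h, sub_eq_add_neg]
  have hterm : ∀ s : Finset (Fin m),
      (∏ i ∈ sᶜ, -X (part i)) * ((M.map C).submatrix ((↑) : s → Fin m) (↑)).det
        = monomial (∑ i ∈ sᶜ, Finsupp.single (part i) 1)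
            ((-1) ^ #sᶜ * (M.submatrix ((↑) : s → Fin m) (↑)).det) := by
    intro s
    have hC : ((M.map C).submatrix ((↑) : s → Fin m) (↑)).det
        = C (M.submatrix ((↑) : s → Fin m) (↑)).det :=
      (RingHom.map_det (C (σ := Fin p)) (M.submatrix ((↑) : s → Fin m) (↑))).symm
    have hX : ∀ j : Fin p, -X j = monomial (Finsupp.single j 1) (-1 : ℝ) := fun j => by
      rw [X, map_neg]
    simp only [hC, hX, ← monomial_sum_prod, prod_const, C_mul_monomial, mul_comm _ (C _)]
    rw [mul_comm]
  have hfiber : ∀ u : Finset (Fin m), ∑ i ∈ u, Finsupp.single (part i) 1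
      = Finsupp.equivFunOnFinite.symm e ↔ ∀ l, #(u.filter (part · = l)) = e l := fun u => by
    simp only [Finsupp.ext_iff, Finsupp.finsetSum_single_one_apply,
      Finsupp.coe_equivFunOnFinite_symm]
  rw [mcharCoeff, hmatrix, det_add_diagonal, coeff_sum]
  simp only [hterm, coeff_monomial]
  rw [mul_sum, ← sum_filter]
  refine sum_congr (filter_congr fun s _ => hfiber sᶜ) fun s hs => ?_
  rw [card_eq_sum_card_fiberwise (f := part) (t := univ) fun _ _ => mem_univ _,
    sum_congr rfl fun l _ => (mem_filter.1 hs).2 l]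

section Residual

variable {m n : ℕ} (A : Fin m → EuclideanSpace ℝ (Fin n)) (S : Finset (Fin m))

lemma gramDet_eq_det_gram : gramDet A S = (Matrix.gram ℝ fun i : S => A i).det := rfl

lemma gramDet_nonneg : 0 ≤ gramDet A S :=
  (posSemidef_gram ℝ _).det_nonneg

lemma sub_res_mem_span (j : Fin m) :
    A j - res A S j ∈ Submodule.span ℝ (Set.range fun i : S => A i) := by
  rw [res, sub_sub_cancel]
  exact Set.image_eq_range A S ▸ Submodule.coe_mem _

lemma inner_res_eq_zero {i : Fin m} (hi : i ∈ S) (j : Fin m) : ⟪A i, res A S j⟫_ℝ = 0 :=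
  Submodule.inner_right_of_mem_orthogonal (Submodule.subset_span (Set.mem_image_of_mem A hi))
    (Submodule.sub_starProjection_mem_orthogonal _)

lemma res_eq_zero {j : Fin m} (hj : j ∈ S) : res A S j = 0 :=
  sub_eq_zero.2
    (Submodule.starProjection_eq_self_iff.2 (Submodule.subset_span (Set.mem_image_of_mem A hj))).symm

lemma gramDet_res_eq_zero {T : Finset (Fin m)} (hST : ¬Disjoint S T) :
    gramDet (res A S) T = 0 := by
  obtain ⟨j, hjS, hjT⟩ := not_disjoint_iff.1 hST
  exact det_eq_zero_of_row_eq_zero ⟨j, hjT⟩ fun k => by simp [res_eq_zero A S hjS]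

lemma gramDet_union {T : Finset (Fin m)} (hST : Disjoint S T) :
    gramDet A (S ∪ T) = gramDet A S * gramDet (res A S) T := by
  calc gramDet A (S ∪ T)
      = (Matrix.gram ℝ (Sum.elim (fun i : S => A i) (fun j : T => A j))).det := by
        rw [gramDet_eq_det_gram, ← det_submatrix_equiv_self (Equiv.Finset.union S T hST)]
        congr 1
        ext (i | i) (j | j) <;> rfl
    _ = (Matrix.gram ℝ (Sum.elim (fun i : S => A i) (fun j : T => res A S j))).det :=
        det_gram_sumElim_of_sub_mem_span _ _ _ fun j => sub_res_mem_span A S j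
    _ = gramDet A S * gramDet (res A S) T :=
        det_gram_sumElim_of_inner_eq_zero _ _ fun i j => inner_res_eq_zero A S i.2 j

end Residual

theorem statement7_general {m n p : ℕ} (A : Fin m → EuclideanSpace ℝ (Fin n)) (part : Fin m → Fin p)
    (mi ki ti : Fin p → ℕ)
    (hmi : ∀ l, (Finset.univ.filter (fun x => part x = l)).card = mi l)
    (hki : ∀ l, ki l ≤ mi l)
    (S : Finset (Fin m))
    (htk : ∀ l, ti l ≤ ki l) :
    (∑ T ∈ Finset.univ.filter (fun T : Finset (Fin m) =>
        T ⊆ Sᶜ ∧ ∀ l, (T.filter (fun x => part x = l)).card = ki l - ti l),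
        gramDet A (S ∪ T))
      = gramDet A S *
        |mcharCoeff (gram (res A S)) part (fun l => mi l - ki l + ti l)| := by
  have hcompl : ∀ (T : Finset (Fin m)) l, #(Tᶜ.filter (part · = l)) = mi l - ki l + ti l ↔
      #(T.filter (part · = l)) = ki l - ti l := fun T l => by
    have := card_filter_add_card_filter_compl T (part · = l)
    have := hmi l; have := hki l; have := htk l
    omega
  calc _ = ∑ T ∈ univ.filter (fun T : Finset (Fin m) =>
        T ⊆ Sᶜ ∧ ∀ l, #(T.filter (part · = l)) = ki l - ti l),
          gramDet A S * gramDet (res A S) T :=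
        sum_congr rfl fun T hT =>
          gramDet_union A S (subset_compl_iff_disjoint_left.1 (mem_filter.1 hT).2.1)
    _ = gramDet A S * ∑ T ∈ univ.filter (fun T : Finset (Fin m) =>
        ∀ l, #(T.filter (part · = l)) = ki l - ti l), gramDet (res A S) T := by
      rw [← mul_sum]
      congr 1
      refine sum_subset (fun T hT => mem_filter.2 ⟨mem_univ _, (mem_filter.1 hT).2.2⟩)
        fun T hT hT' => gramDet_res_eq_zero A S fun hST => hT' ?_
      exact mem_filter.2 ⟨mem_univ _, subset_compl_iff_disjoint_left.2 hST, (mem_filter.1 hT).2⟩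
    _ = _ := by
      rw [mcharCoeff_eq_sum_det_submatrix, abs_mul, abs_pow, abs_neg, abs_one, one_pow, one_mul,
        filter_congr fun T _ => forall_congr' (hcompl T)]
      exact congrArg _ (abs_of_nonneg (sum_nonneg fun T _ => gramDet_nonneg (res A S) T)).symm

/-- with partition `[m] = 𝒫₁ ⊎ ⋯ ⊎ 𝒫_p` (`|𝒫_l| = m_l`), targets `k_l ≤ m_l`,
a set `S` with `|S ∩ 𝒫_l| = t_l ≤ k_l`, and `B = A - π_S(A)`, the sum of
`det(A_{S∪T} A_{S∪T}^T)` over all `T ⊆ [m] \ S` with `|T ∩ 𝒫_l| = k_l - t_l` for all `l`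
equals `det(A_S A_S^T) ⬝ |c''(B B^T)|`, where `c'' = c_{m₁-k₁+t₁, …, m_p-k_p+t_p}`. -/
theorem statement7 {m n p : ℕ} (A : Fin m → EuclideanSpace ℝ (Fin n)) (part : Fin m → Fin p)
    (mi ki ti : Fin p → ℕ)
    (hmi : ∀ l, (Finset.univ.filter (fun x => part x = l)).card = mi l)
    (hki : ∀ l, ki l ≤ mi l)
    (S : Finset (Fin m))
    (hti : ∀ l, (S.filter (fun x => part x = l)).card = ti l)
    (htk : ∀ l, ti l ≤ ki l) :
    (∑ T ∈ Finset.univ.filter (fun T : Finset (Fin m) =>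
        T ⊆ Sᶜ ∧ ∀ l, (T.filter (fun x => part x = l)).card = ki l - ti l),
        gramDet A (S ∪ T))
      = gramDet A S *
        |mcharCoeff (gram (res A S)) part (fun l => mi l - ki l + ti l)| :=
  statement7_general A part mi ki ti hmi hki S htk
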